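/- arXiv:2108.03172 — 3 statements merged into one kernel-verified Lean document; each statement's English description precedes it below -/
import Mathlib

section
/- Every complex eigenvalue of the matrix F_Q = Q + (I − Q) F₀ is real. -/
open Matrix

theorem stmt_4 (n : ℕ) (hn : 2 ≤ n) (G : SimpleGraph (Fin n)) [DecidableRel G.Adj]
    (hdeg : ∀ i, 0 < G.degree i)
    (q : Fin n → ℝ) (hq : ∀ i, q i < 1)
    (A D F0 Q FQ : Matrix (Fin n) (Fin n) ℝ)
    (hA : A = G.adjMatrix ℝ)
    (hD : D = Matrix.diagonal fun i => (G.degree i : ℝ))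
    (hF0 : F0 = D⁻¹ * A)
    (hQ : Q = Matrix.diagonal q)
    (hFQ : FQ = Q + (1 - Q) * F0) :
    ∀ μ : ℂ,
      (∃ v : Fin n → ℂ, v ≠ 0 ∧ (FQ.map Complex.ofReal).mulVec v = μ • v) →
      μ.im = 0 := by
  intro μ ⟨v, hv, hev⟩
  -- weights
  set w : Fin n → ℝ := fun i => (G.degree i : ℝ) / (1 - q i) with hw
  have hw1 : ∀ i, (0:ℝ) < 1 - q i := fun i => by linarith [hq i]
  have hwpos : ∀ i, 0 < w i := fun i => div_pos (by exact_mod_cast hdeg i) (hw1 i)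
  -- D invertible
  have hDdet : IsUnit D.det := by
    rw [hD, Matrix.det_diagonal]
    refine (Finset.prod_pos fun i _ => ?_).ne'.isUnit
    exact_mod_cast hdeg i
  have hDinv : D * D⁻¹ = 1 := Matrix.mul_nonsing_inv D hDdet
  -- B = diag w * FQ is symmetric
  set B : Matrix (Fin n) (Fin n) ℝ := Matrix.diagonal w * FQ with hB
  have hWQ : Matrix.diagonal w * (1 - Q) = D := by
    rw [hQ, hD]
    have h1 : (1 : Matrix (Fin n) (Fin n) ℝ) - Matrix.diagonal q
        = Matrix.diagonal (fun i => 1 - q i) := by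
      rw [← Matrix.diagonal_one, Matrix.diagonal_sub]
    rw [h1, Matrix.diagonal_mul_diagonal]
    exact congrArg Matrix.diagonal (funext fun i => div_mul_cancel₀ _ (hw1 i).ne')
  have hBform : B = Matrix.diagonal (fun i => w i * q i) + A := by
    rw [hB, hFQ, mul_add, hQ, Matrix.diagonal_mul_diagonal, ← hQ, ← mul_assoc, hWQ,
      hF0, ← mul_assoc, hDinv, one_mul]
  have hBsymm : Bᵀ = B := by
    rw [hBform, Matrix.transpose_add, Matrix.diagonal_transpose, hA,
      SimpleGraph.transpose_adjMatrix]
  -- complex versions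
  set M : Matrix (Fin n) (Fin n) ℂ := B.map Complex.ofReal with hM
  have hMherm : Mᴴ = M := by
    ext i j
    simp only [hM, Matrix.conjTranspose_apply, Matrix.map_apply, Complex.star_def,
      Complex.conj_ofReal]
    rw [← Matrix.transpose_apply B i j, hBsymm]
  set W : Matrix (Fin n) (Fin n) ℂ := (Matrix.diagonal w).map Complex.ofReal with hWc
  have hWc' : W = Matrix.diagonal (fun i => (w i : ℂ)) := by
    rw [hWc, Matrix.diagonal_map (by simp)]
  have hMW : M = W * (FQ.map Complex.ofReal) := by
    ext i j
    simp only [hM, hB, hWc, Matrix.map_apply, Matrix.mul_apply]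
    push_cast
    rfl
  -- quadratic form
  set c : ℂ := star v ⬝ᵥ W *ᵥ v with hc
  have hz : star v ⬝ᵥ M *ᵥ v = μ * c := by
    rw [hMW, ← Matrix.mulVec_mulVec, hev, Matrix.mulVec_smul, dotProduct_smul,
      smul_eq_mul, hc]
  -- c is a positive real
  have hcval : c = ∑ i, (w i : ℂ) * Complex.normSq (v i) := by
    rw [hc, hWc']
    simp only [dotProduct, Matrix.mulVec_diagonal, Pi.star_apply, Complex.star_def]
    refine Finset.sum_congr rfl fun i _ => ?_
    rw [Complex.normSq_eq_conj_mul_self]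
    ring
  have hcre : (c.re : ℂ) = c := by
    rw [hcval]
    push_cast
    simp [Complex.ext_iff]
  have hcpos : 0 < c.re := by
    have : c = ((∑ i, w i * Complex.normSq (v i) : ℝ) : ℂ) := by
      rw [hcval]; push_cast; ring
    rw [this, Complex.ofReal_re]
    obtain ⟨i, hi⟩ : ∃ i, v i ≠ 0 := by
      by_contra h; push_neg at h; exact hv (funext h)
    refine Finset.sum_pos' (fun j _ => mul_nonneg (hwpos j).le (Complex.normSq_nonneg _)) ?_
    exact ⟨i, Finset.mem_univ i, mul_pos (hwpos i) (Complex.normSq_pos.2 hi)⟩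
  -- self-adjointness of the quadratic form
  have hMs : ∀ i j, star (M i j) = M j i := by
    intro i j
    conv_rhs => rw [← hMherm]
    rw [Matrix.conjTranspose_apply]
  have hself : star (star v ⬝ᵥ M *ᵥ v) = star v ⬝ᵥ M *ᵥ v := by
    simp only [dotProduct, Matrix.mulVec, dotProduct, Finset.mul_sum,
      star_sum, star_mul', Pi.star_apply, star_star]
    rw [Finset.sum_comm]
    refine Finset.sum_congr rfl fun i _ => Finset.sum_congr rfl fun j _ => ?_
    rw [hMs]
    ring
  rw [hz, ← hcre, star_mul', Complex.star_def, Complex.conj_ofReal] at hself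
  have hcne : (c.re : ℂ) ≠ 0 := by exact_mod_cast hcpos.ne'
  have hmu : (starRingEnd ℂ) μ = μ := by
    have h2 : star μ * (c.re : ℂ) = μ * (c.re : ℂ) := hself
    exact mul_right_cancel₀ hcne h2
  exact Complex.conj_eq_iff_im.mp hmu
end

section
/- Assume G is connected and every complex eigenvalue λ ≠ 1 of F_Q satisfies |λ| < 1. Then for every initial vector x(0) ∈ ℝⁿ, the sequence defined by the iteration x(k+1) = F_Q x(k) + (1/2)(I − Q) D⁻¹ x̃ converges as k → ∞ to a limit x* ∈ ℝⁿ, and this limit satisfies 2 L x* = x̃; in particular, for every edge {i,j} the relative difference x*_i − x*_j coincides with x_i − x_j for any solution x of 2 L x = x̃. -/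
/-!
Write `B = (I - Q) D⁻¹ = diag b` with `b > 0`, so that `F_Q = I - B L` and the iteration reads
`x(k+1) = F_Q x(k) + B x̃ / 2`. As `L` is symmetric with `L 1 = 0`, its range lies in the hyperplane
of vectors summing to zero; for connected `G` its kernel is the line of constants, so by rank-nullity
the range is that hyperplane. Since `x̃` sums to zero there is `y` with `2 L y = x̃`; it is a fixed
point of the iteration, so `x(k) = y + F_Q^k (x(0) - y)`.

With `S = B^{1/2}` we have `F_Q S = S (I - S L S)`, so `S` carries an orthonormal eigenbasis of the
symmetric matrix `I - S L S` to a real eigenbasis of `F_Q`. By hypothesis each of its eigenvalues is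
`1` or of modulus `< 1`, hence `F_Q^k w` converges for every `w`, to a fixed point `z` of `F_Q`;
then `B L z = 0`, i.e. `L z = 0`, and `x* = y + z` solves `2 L x* = x̃`. Two solutions differ by an
element of the kernel of `L`, a constant vector.
-/

open Matrix Filter Finset Topology

namespace Module.End

variable {𝕜 M : Type*} [NormedRing 𝕜] [AddCommGroup M] [Module 𝕜 M] [TopologicalSpace M]
  [ContinuousAdd M] [ContinuousSMul 𝕜 M]

def convergentOrbits (f : End 𝕜 M) : Submodule 𝕜 M where
  carrier := {w | ∃ z, Tendsto (fun k => (f ^ k) w) atTop (𝓝 z)}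
  zero_mem' := ⟨0, by simpa using tendsto_const_nhds⟩
  add_mem' := by
    rintro v w ⟨y, hy⟩ ⟨z, hz⟩
    exact ⟨y + z, by simpa using hy.add hz⟩
  smul_mem' := by
    rintro c w ⟨z, hz⟩
    exact ⟨c • z, by simpa using hz.const_smul c⟩

theorem mem_convergentOrbits_of_apply_eq_smul {f : End 𝕜 M} {μ : 𝕜} {v : M}
    (hv : f v = μ • v) (hμ : μ = 1 ∨ ‖μ‖ < 1) : v ∈ f.convergentOrbits := by
  have hpow (k : ℕ) : (f ^ k) v = μ ^ k • v := by
    induction k with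
    | zero => simp
    | succ k ih => rw [pow_succ', mul_apply, ih, map_smul, hv, smul_smul, pow_succ]
  rcases hμ with rfl | hμ
  · exact ⟨v, by simpa [hpow] using tendsto_const_nhds⟩
  · exact ⟨0, by simpa [hpow] using (tendsto_pow_atTop_nhds_zero_of_norm_lt_one hμ).smul_const v⟩

theorem convergentOrbits_eq_top {ι : Type*} {f : End 𝕜 M} {v : ι → M} {μ : ι → 𝕜}
    (hv : ∀ i, f (v i) = μ i • v i) (hμ : ∀ i, μ i = 1 ∨ ‖μ i‖ < 1)
    (hspan : Submodule.span 𝕜 (Set.range v) = ⊤) : f.convergentOrbits = ⊤ := by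
  rw [eq_top_iff, ← hspan, Submodule.span_le]
  rintro _ ⟨i, rfl⟩
  exact mem_convergentOrbits_of_apply_eq_smul (hv i) (hμ i)

end Module.End

namespace Matrix

variable {n : Type*} [Fintype n]

theorem pow_mulVec_sub_of_iterate [DecidableEq n] {R : Type*} [Ring R] {F : Matrix n n R}
    {c y : n → R} (hy : F *ᵥ y + c = y) {x : ℕ → n → R} (hx : ∀ k, x (k + 1) = F *ᵥ x k + c)
    (k : ℕ) : x k = y + (F ^ k) *ᵥ (x 0 - y) := by
  induction k with
  | zero => simp
  | succ k ih => rw [hx, ih, mulVec_add, pow_succ', ← mulVec_mulVec, add_right_comm, hy]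

theorem mulVec_eq_self_of_tendsto_pow_mulVec [DecidableEq n] {R : Type*} [Semiring R]
    [TopologicalSpace R] [ContinuousAdd R] [ContinuousMul R] [T2Space R] {F : Matrix n n R}
    {w z : n → R} (hz : Tendsto (fun k => (F ^ k) *ᵥ w) atTop (𝓝 z)) : F *ᵥ z = z := by
  have hcont : Continuous (F *ᵥ ·) := continuous_const.matrix_mulVec continuous_id
  refine tendsto_nhds_unique ((hcont.tendsto z).comp hz) ?_
  simpa [Function.comp_def, pow_succ', mulVec_mulVec] using (tendsto_add_atTop_iff_nat 1).mpr hz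

theorem exists_tendsto_of_iterate_eq_one_sub_mul [DecidableEq n] {R : Type*} [CommRing R]
    [TopologicalSpace R] [IsTopologicalRing R] [T2Space R] {B L F : Matrix n n R} (hB : IsUnit B)
    (hF : F = 1 - B * L) (hconv : ∀ w, ∃ z, Tendsto (fun k => (F ^ k) *ᵥ w) atTop (𝓝 z))
    {c y : n → R} (hy : L *ᵥ y = c) {x : ℕ → n → R} (hx : ∀ k, x (k + 1) = F *ᵥ x k + B *ᵥ c) :
    ∃ xs, Tendsto x atTop (𝓝 xs) ∧ L *ᵥ xs = c := by
  have hfix : F *ᵥ y + B *ᵥ c = y := by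
    rw [hF, sub_mulVec, one_mulVec, ← mulVec_mulVec, hy, sub_add_cancel]
  obtain ⟨z, hz⟩ := hconv (x 0 - y)
  have hLz : L *ᵥ z = 0 := by
    have hBLz := mulVec_eq_self_of_tendsto_pow_mulVec hz
    rw [hF, sub_mulVec, one_mulVec, sub_eq_self, ← mulVec_mulVec, ← mulVec_zero B] at hBLz
    exact mulVec_injective_of_isUnit hB hBLz
  refine ⟨y + z, ?_, by rw [mulVec_add, hLz, add_zero, hy]⟩
  rw [funext (pow_mulVec_sub_of_iterate hfix hx)]
  exact tendsto_const_nhds.add hz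

theorem add_one_sub_mul_nonsing_inv_mul [DecidableEq n] {R : Type*} [CommRing R]
    {Q D A : Matrix n n R} (hD : IsUnit D.det) :
    Q + (1 - Q) * (D⁻¹ * A) = 1 - (1 - Q) * D⁻¹ * (D - A) := by
  rw [mul_sub, mul_assoc _ D⁻¹ D, nonsing_inv_mul D hD, mul_one, mul_assoc]
  abel

theorem inv_diagonal_of_ne_zero [DecidableEq n] {K : Type*} [Field K] {d : n → K}
    (hd : ∀ i, d i ≠ 0) : (diagonal d)⁻¹ = diagonal fun i => (d i)⁻¹ := by
  refine inv_eq_left_inv ?_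
  rw [diagonal_mul_diagonal, ← diagonal_one]
  exact congrArg diagonal (funext fun i => inv_mul_cancel₀ (hd i))

theorem IsHermitian.span_eigenvectorBasis [DecidableEq n] {𝕜 : Type*} [RCLike 𝕜]
    {A : Matrix n n 𝕜} (hA : A.IsHermitian) :
    Submodule.span 𝕜 (Set.range fun j => ⇑(hA.eigenvectorBasis j)) = ⊤ :=
  (hA.eigenvectorBasis.toBasis.map (WithLp.linearEquiv 2 𝕜 (n → 𝕜))).span_eq

theorem eq_one_or_abs_lt_one_of_mulVec_eq_smul {F : Matrix n n ℝ}
    (hspec : ∀ μ : ℂ, (∃ v : n → ℂ, v ≠ 0 ∧ (F.map Complex.ofReal).mulVec v = μ • v) →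
      μ ≠ 1 → ‖μ‖ < 1)
    {μ : ℝ} {v : n → ℝ} (hv0 : v ≠ 0) (hv : F *ᵥ v = μ • v) : μ = 1 ∨ |μ| < 1 := by
  refine or_iff_not_imp_left.mpr fun hμ => ?_
  have hcomplex :
      (F.map Complex.ofReal) *ᵥ (Complex.ofReal ∘ v) = (μ : ℂ) • (Complex.ofReal ∘ v) := by
    rw [show (Complex.ofReal : ℝ → ℂ) = Complex.ofRealHom from rfl]
    ext i
    simpa [hv] using (RingHom.map_mulVec Complex.ofRealHom F v i).symm
  have hv0' : Complex.ofReal ∘ v ≠ 0 := fun h =>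
    hv0 (funext fun i => Complex.ofReal_eq_zero.mp (congrFun h i))
  simpa using hspec μ ⟨_, hv0', hcomplex⟩ (by exact_mod_cast hμ)

theorem exists_tendsto_pow_mulVec_of_eq_one_sub_diagonal_mul [DecidableEq n]
    {F L : Matrix n n ℝ} {b : n → ℝ} (hb : ∀ i, 0 < b i) (hL : L.IsSymm)
    (hF : F = 1 - diagonal b * L)
    (hspec : ∀ μ : ℂ, (∃ v : n → ℂ, v ≠ 0 ∧ (F.map Complex.ofReal).mulVec v = μ • v) →
      μ ≠ 1 → ‖μ‖ < 1)
    (w : n → ℝ) : ∃ z, Tendsto (fun k => (F ^ k) *ᵥ w) atTop (𝓝 z) := by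
  set S := diagonal fun i => √(b i)
  have hS : IsUnit S := isUnit_diagonal.mpr <| Pi.isUnit_iff.mpr fun i =>
    (Real.sqrt_pos.mpr (hb i)).ne'.isUnit
  have hSS : S * S = diagonal b := by
    simp only [S, diagonal_mul_diagonal, Real.mul_self_sqrt (hb _).le]
  set M := 1 - S * L * S
  have hM : M.IsHermitian := by
    have hST : Sᵀ = S := diagonal_transpose _
    simp [M, IsHermitian, conjTranspose_eq_transpose_of_trivial, transpose_mul, hL.eq, hST,
      mul_assoc]
  have hFS : F * S = S * M := by
    simp only [hF, M, ← hSS, mul_sub, sub_mul, mul_one, one_mul, mul_assoc]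
  let v j := S *ᵥ ⇑(hM.eigenvectorBasis j)
  have hv j : F *ᵥ v j = hM.eigenvalues j • v j := by
    rw [mulVec_mulVec, hFS, ← mulVec_mulVec, hM.mulVec_eigenvectorBasis, mulVec_smul]
  have hv0 j : v j ≠ 0 := by
    rw [ne_eq, ← mulVec_zero S, (mulVec_injective_iff_isUnit.mpr hS).eq_iff, WithLp.ofLp_eq_zero]
    exact hM.eigenvectorBasis.orthonormal.ne_zero j
  have hspan : Submodule.span ℝ (Set.range v) = ⊤ := by
    rw [show v = mulVecLin S ∘ fun j => ⇑(hM.eigenvectorBasis j) from rfl, Set.range_comp,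
      Submodule.span_image, hM.span_eigenvectorBasis, Submodule.map_top, LinearMap.range_eq_top]
    exact mulVec_surjective_iff_isUnit.mpr hS
  have htop := Module.End.convergentOrbits_eq_top (f := toLin' F) hv
    (fun j => (eq_one_or_abs_lt_one_of_mulVec_eq_smul hspec (hv0 j) (hv j)).imp_right
      (by simpa using ·)) hspan
  obtain ⟨z, hz⟩ : w ∈ Module.End.convergentOrbits (toLin' F) := htop ▸ Submodule.mem_top
  exact ⟨z, by simpa [← toLin'_pow] using hz⟩

end Matrix

namespace SimpleGraph

variable {V : Type*} [Fintype V]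

theorem sum_sum_neighborFinset_comm (G : SimpleGraph V) [DecidableRel G.Adj] {M : Type*}
    [AddCommMonoid M] (f : V → V → M) :
    ∑ i, ∑ j ∈ G.neighborFinset i, f j i = ∑ i, ∑ j ∈ G.neighborFinset i, f i j := by
  simp only [neighborFinset_eq_filter, sum_filter]
  rw [sum_comm]
  simp only [G.adj_comm]

variable [DecidableEq V] {G : SimpleGraph V} [DecidableRel G.Adj]

theorem sum_lapMatrix_mulVec (x : V → ℝ) : ∑ i, (G.lapMatrix ℝ *ᵥ x) i = 0 := by
  rw [← one_dotProduct, dotProduct_mulVec, ← mulVec_transpose, (G.isSymm_lapMatrix (R := ℝ)).eq]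
  exact (congrArg (· ⬝ᵥ x) G.lapMatrix_mulVec_const_eq_zero).trans (zero_dotProduct x)

theorem Connected.finrank_ker_toLin'_lapMatrix (hG : G.Connected) :
    Module.finrank ℝ (LinearMap.ker (G.lapMatrix ℝ).toLin') = 1 := by
  have := hG.nonempty
  have := hG.preconnected.subsingleton_connectedComponent
  rw [← card_connectedComponent_eq_finrank_ker_toLin'_lapMatrix]
  exact le_antisymm (Fintype.card_le_one_iff_subsingleton.mpr ‹_›) Fintype.card_pos

theorem Connected.exists_lapMatrix_mulVec_eq (hG : G.Connected) {v : V → ℝ}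
    (hv : ∑ i, v i = 0) : ∃ x, G.lapMatrix ℝ *ᵥ x = v := by
  have := hG.nonempty
  let total : Module.Dual ℝ (V → ℝ) := ∑ i, LinearMap.proj i
  have htotal (w : V → ℝ) : total w = ∑ i, w i := by simp [total]
  have htotal_ne : total ≠ 0 := fun h => by simpa [htotal] using LinearMap.congr_fun h 1
  have hrange : LinearMap.range (G.lapMatrix ℝ).toLin' = LinearMap.ker total := by
    refine Submodule.eq_of_le_of_finrank_eq ?_ ?_
    · rintro _ ⟨x, rfl⟩
      rw [LinearMap.mem_ker, htotal, toLin'_apply]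
      exact sum_lapMatrix_mulVec x
    · have hL := LinearMap.finrank_range_add_finrank_ker (G.lapMatrix ℝ).toLin'
      have htot := total.finrank_ker_add_one_of_ne_zero htotal_ne
      rw [hG.finrank_ker_toLin'_lapMatrix] at hL
      omega
  obtain ⟨x, hx⟩ : v ∈ LinearMap.range (G.lapMatrix ℝ).toLin' := by
    rw [hrange, LinearMap.mem_ker, htotal, hv]
  exact ⟨x, hx⟩

theorem Connected.sub_eq_sub_of_lapMatrix_mulVec_eq (hG : G.Connected) {x y : V → ℝ}
    (h : G.lapMatrix ℝ *ᵥ x = G.lapMatrix ℝ *ᵥ y) (i j : V) : x i - x j = y i - y j := by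
  have h0 : G.lapMatrix ℝ *ᵥ (x - y) = 0 := by rw [mulVec_sub, h, sub_self]
  have := (lapMatrix_mulVec_eq_zero_iff_forall_reachable G).mp h0 i j (hG.preconnected i j)
  simp only [Pi.sub_apply] at this
  linarith

end SimpleGraph

theorem stmt_10_general (n : ℕ) (G : SimpleGraph (Fin n)) [DecidableRel G.Adj]
    (hdeg : ∀ i, 0 < G.degree i) (hconn : G.Connected)
    (q : Fin n → ℝ) (hq : ∀ i, q i < 1)
    (A D L F0 Q FQ : Matrix (Fin n) (Fin n) ℝ)
    (hA : A = G.adjMatrix ℝ)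
    (hD : D = Matrix.diagonal fun i => (G.degree i : ℝ))
    (hL : L = D - A)
    (hF0 : F0 = D⁻¹ * A)
    (hQ : Q = Matrix.diagonal q)
    (hFQ : FQ = Q + (1 - Q) * F0)
    (xt : Fin n → Fin n → ℝ) (xtv : Fin n → ℝ)
    (hxtv : xtv = fun i => ∑ j ∈ G.neighborFinset i, (xt j i - xt i j))
    (hspec : ∀ μ : ℂ,
      (∃ v : Fin n → ℂ, v ≠ 0 ∧ (FQ.map Complex.ofReal).mulVec v = μ • v) →
      μ ≠ 1 → ‖μ‖ < 1) :
    ∀ (x0 : Fin n → ℝ) (x : ℕ → Fin n → ℝ),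
      x 0 = x0 →
      (∀ k, x (k + 1) = FQ.mulVec (x k) + ((1 / 2 : ℝ) • ((1 - Q) * D⁻¹)).mulVec xtv) →
      ∃ xs : Fin n → ℝ,
        Tendsto x atTop (nhds xs) ∧
        (2 : ℝ) • L.mulVec xs = xtv ∧
        ∀ i j : Fin n, G.Adj i j →
          ∀ y : Fin n → ℝ, (2 : ℝ) • L.mulVec y = xtv → xs i - xs j = y i - y j := by
  intro _ x _ hx
  have hdeg_ne i : (G.degree i : ℝ) ≠ 0 := by exact_mod_cast (hdeg i).ne'
  have hLG : L = G.lapMatrix ℝ := by rw [hL, hD, hA]; rfl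
  set b : Fin n → ℝ := fun i => (1 - q i) * (G.degree i : ℝ)⁻¹
  have hb i : 0 < b i := mul_pos (sub_pos.mpr (hq i)) (inv_pos.mpr (by exact_mod_cast hdeg i))
  have hB : (1 - Q) * D⁻¹ = diagonal b := by
    rw [hQ, hD, inv_diagonal_of_ne_zero hdeg_ne, ← diagonal_one, diagonal_sub,
      diagonal_mul_diagonal]
  have hFQ' : FQ = 1 - diagonal b * L := by
    rw [hFQ, hF0, hL, ← hB]
    refine add_one_sub_mul_nonsing_inv_mul ?_
    rw [hD, det_diagonal]
    exact (prod_ne_zero_iff.mpr fun i _ => hdeg_ne i).isUnit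
  obtain ⟨y, hy⟩ : ∃ y, L *ᵥ y = (1 / 2 : ℝ) • xtv := by
    rw [hLG]
    refine hconn.exists_lapMatrix_mulVec_eq ?_
    simp only [hxtv, Pi.smul_apply, smul_eq_mul, ← mul_sum, sum_sub_distrib]
    rw [G.sum_sum_neighborFinset_comm, sub_self, mul_zero]
  obtain ⟨xs, hlim, hLxs⟩ := exists_tendsto_of_iterate_eq_one_sub_mul
    (isUnit_diagonal.mpr (Pi.isUnit_iff.mpr fun i => (hb i).ne'.isUnit)) hFQ'
    (exists_tendsto_pow_mulVec_of_eq_one_sub_diagonal_mul hb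
      (hLG ▸ G.isSymm_lapMatrix (R := ℝ)) hFQ' hspec) hy
    (x := x) (fun k => by rw [hx, hB, smul_mulVec, mulVec_smul])
  have hsol : (2 : ℝ) • L *ᵥ xs = xtv := by
    rw [hLxs, smul_smul]
    norm_num
  refine ⟨xs, hlim, hsol, fun i j _ y' hy' => hconn.sub_eq_sub_of_lapMatrix_mulVec_eq ?_ i j⟩
  rw [← hLG]
  exact smul_right_injective _ two_ne_zero (hsol.trans hy'.symm)

theorem stmt_10 (n : ℕ) (hn : 2 ≤ n) (G : SimpleGraph (Fin n)) [DecidableRel G.Adj]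
    (hdeg : ∀ i, 0 < G.degree i) (hconn : G.Connected)
    (q : Fin n → ℝ) (hq : ∀ i, q i < 1)
    (A D L F0 Q FQ : Matrix (Fin n) (Fin n) ℝ)
    (hA : A = G.adjMatrix ℝ)
    (hD : D = Matrix.diagonal fun i => (G.degree i : ℝ))
    (hL : L = D - A)
    (hF0 : F0 = D⁻¹ * A)
    (hQ : Q = Matrix.diagonal q)
    (hFQ : FQ = Q + (1 - Q) * F0)
    (xt : Fin n → Fin n → ℝ) (xtv : Fin n → ℝ)
    (hxtv : xtv = fun i => ∑ j ∈ G.neighborFinset i, (xt j i - xt i j))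
    (hspec : ∀ μ : ℂ,
      (∃ v : Fin n → ℂ, v ≠ 0 ∧ (FQ.map Complex.ofReal).mulVec v = μ • v) →
      μ ≠ 1 → ‖μ‖ < 1) :
    ∀ (x0 : Fin n → ℝ) (x : ℕ → Fin n → ℝ),
      x 0 = x0 →
      (∀ k, x (k + 1) = FQ.mulVec (x k) + ((1 / 2 : ℝ) • ((1 - Q) * D⁻¹)).mulVec xtv) →
      ∃ xs : Fin n → ℝ,
        Tendsto x atTop (nhds xs) ∧
        (2 : ℝ) • L.mulVec xs = xtv ∧
        ∀ i j : Fin n, G.Adj i j →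
          ∀ y : Fin n → ℝ, (2 : ℝ) • L.mulVec y = xtv → xs i - xs j = y i - y j :=
  stmt_10_general n G hdeg hconn q hq A D L F0 Q FQ hA hD hL hF0 hQ hFQ xt xtv hxtv hspec
end

section
/- Assume G is connected and let 0 = λ₀ < λ₁ ≤ … ≤ λ_{n−1} be the eigenvalues of the normalized Laplacian 𝓛 listed in increasing order (with multiplicity). For η ∈ ℝ define the convergence rate index r(η) = max_{1 ≤ i ≤ n−1} |1 − (1 − η)λ_i|, which is the maximum modulus of the eigenvalues of F_η = ηI + (1 − η)F₀ other than the eigenvalue 1 associated with 𝟙. Then for every η ∈ ℝ, r(η) ≥ (λ_{n−1} − λ₁)/(λ₁ + λ_{n−1}), and equality holds at the optimal parameter η* = 1 − 2/(λ₁ + λ_{n−1}) = 1 − 1/ς_𝓛, where ς_𝓛 = (λ₁ + λ_{n−1})/2. -/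
open Matrix

/-- The convergence rate index `r(η)`: the maximum of `|1 - (1 - η) λ_i|` over the
eigenvalues `λ_i` of the normalized Laplacian with index `i ≠ 0` (i.e. omitting the
eigenvalue `λ_0 = 0` of `𝓛`, corresponding to the eigenvalue `1` of `F_η` associated
with the all-ones vector). -/
noncomputable def cri (n : ℕ) (lam : Fin n → ℝ) (η : ℝ) : ℝ :=
  ⨆ i : {i : Fin n // (i : ℕ) ≠ 0}, |1 - (1 - η) * lam i.1|

/-! `F_η = D^{-1/2} (η + (1 - η)(1 - 𝓛)) D^{1/2}` is similar to an affine function of `𝓛`, so its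
characteristic roots are the `1 - (1 - η) λ_i`. Weighting the two extreme terms gives
`λ_{n-1} |1 - (1 - η) λ₁| + λ₁ |1 - (1 - η) λ_{n-1}| ≥ λ_{n-1} - λ₁`, which bounds `r(η)` from
below. At `η*` the map `x ↦ 1 - (1 - η*) x = (λ₁ + λ_{n-1} - 2x) / (λ₁ + λ_{n-1})` has modulus at
most that bound on `[λ₁, λ_{n-1}]`, with equality at `λ₁`. -/

open Polynomial

namespace Matrix

variable {ι : Type*} [Fintype ι] [DecidableEq ι]

theorem charpoly_mul_mul_of_mul_eq_one {R : Type*} [CommRing R] {P Q : Matrix ι ι R}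
    (hPQ : P * Q = 1) (M : Matrix ι ι R) : (P * M * Q).charpoly = M.charpoly := by
  rw [Matrix.mul_assoc, charpoly_mul_comm, Matrix.mul_assoc, mul_eq_one_comm.mp hPQ,
    Matrix.mul_one]

theorem smul_one_add_smul_mul_mul_of_mul_eq_one {R : Type*} [CommRing R] {P Q : Matrix ι ι R}
    (hPQ : P * Q = 1) (a b : R) (M : Matrix ι ι R) :
    a • 1 + b • (P * M * Q) = P * (a • 1 + b • M) * Q := by
  simp only [Matrix.mul_add, Matrix.add_mul, Matrix.mul_smul, Matrix.smul_mul, Matrix.mul_one,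
    hPQ]

theorem charpoly_smul_comp_C_mul_X {R : Type*} [CommRing R] (b : R) (M : Matrix ι ι R) :
    (b • M).charpoly.comp (C b * X) = C b ^ Fintype.card ι * M.charpoly := by
  have hmap : (compRingHom (C b * X)).mapMatrix (charmatrix (b • M)) = C b • charmatrix M := by
    ext i j
    by_cases hij : i = j
    · subst hij
      simp [charmatrix_apply_eq, mul_sub]
    · simp [charmatrix_apply_ne _ _ _ hij]
  rw [charpoly, ← coe_compRingHom_apply, RingHom.map_det, hmap, det_smul, charpoly]

theorem charpoly_roots_smul {K : Type*} [Field K] {b : K} (hb : b ≠ 0) (M : Matrix ι ι K) :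
    (b • M).charpoly.roots = M.charpoly.roots.map (b * ·) := by
  have h := map_roots_comp_C_mul_X_add_C (b • M).charpoly b 0 (IsUnit.mk0 b hb)
  rw [C_0, add_zero, charpoly_smul_comp_C_mul_X, ← C_pow, roots_C_mul _ (pow_ne_zero _ hb)] at h
  simpa using h.symm

theorem charpoly_roots_smul_one_add {K : Type*} [Field K] (a : K) (M : Matrix ι ι K) :
    (a • 1 + M).charpoly.roots = M.charpoly.roots.map (a + ·) := by
  have hscalar : a • 1 + M = M - scalar ι (-a) := by
    rw [map_neg, sub_neg_eq_add, scalar_apply, ← smul_one_eq_diagonal, add_comm]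
  rw [hscalar, charpoly_sub_scalar, ← one_mul X, ← C_1,
    roots_comp_C_mul_X_add_C _ _ _ isUnit_one]
  simp [add_comm]

theorem charpoly_roots_smul_one_add_smul {K : Type*} [Field K] {M : Matrix ι ι K}
    (hM : Multiset.card M.charpoly.roots = Fintype.card ι) (a b : K) :
    (a • 1 + b • M).charpoly.roots = M.charpoly.roots.map (fun x => a + b * x) := by
  rcases eq_or_ne b 0 with rfl | hb
  · rw [zero_smul, charpoly_roots_smul_one_add, charpoly_zero]
    simp [hM, Multiset.nsmul_singleton]
  · rw [charpoly_roots_smul_one_add, charpoly_roots_smul hb, Multiset.map_map]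
    rfl

theorem diagonal_inv_mul_eq_conj_one_sub {K : Type*} [Field K] {s : ι → K} (hs : ∀ i, s i ≠ 0) (A : Matrix ι ι K) :
    (diagonal fun i => s i ^ 2)⁻¹ * A =
      diagonal (fun i => (s i)⁻¹) *
        (1 - diagonal (fun i => (s i)⁻¹) * (diagonal (fun i => s i ^ 2) - A) *
          diagonal (fun i => (s i)⁻¹)) * diagonal s := by
  have hinv : (diagonal fun i => s i ^ 2)⁻¹ = diagonal fun i => (s i ^ 2)⁻¹ :=
    inv_eq_left_inv (by simp [fun i => inv_mul_cancel₀ (pow_ne_zero 2 (hs i))])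
  ext i j
  rcases eq_or_ne i j with rfl | hij
  · simp only [hinv, diagonal_mul, mul_diagonal, Matrix.sub_apply, one_apply_eq,
      diagonal_apply_eq]
    field_simp [hs i]
    ring
  · simp only [hinv, diagonal_mul, mul_diagonal, Matrix.sub_apply, one_apply_ne hij,
      diagonal_apply_ne _ hij]
    field_simp [hs i, hs j]
    ring

end Matrix

theorem sub_le_mul_abs_add_mul_abs {s t : ℝ} (hs : 0 ≤ s) (ht : 0 ≤ t) (c : ℝ) :
    t - s ≤ t * |1 - c * s| + s * |1 - c * t| := by
  nlinarith [mul_le_mul_of_nonneg_left (le_abs_self (1 - c * s)) ht,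
    mul_le_mul_of_nonneg_left (neg_abs_le (1 - c * t)) hs]

theorem one_sub_two_div_add_mul_left {s t : ℝ} (hst : s + t ≠ 0) :
    1 - 2 / (s + t) * s = (t - s) / (s + t) := by
  field_simp
  ring

theorem abs_one_sub_two_div_add_mul_le {s t x : ℝ} (hs : 0 < s) (hsx : s ≤ x) (hxt : x ≤ t) :
    |1 - 2 / (s + t) * x| ≤ (t - s) / (s + t) := by
  have hst : 0 < s + t := by linarith
  have hx : 1 - 2 / (s + t) * x = (s + t - 2 * x) / (s + t) := by
    field_simp
  rw [hx, abs_div, abs_of_pos hst, div_le_div_iff_of_pos_right hst, abs_le]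
  constructor <;> linarith

section cri

variable {n : ℕ} {lam : Fin n → ℝ}

theorem abs_le_cri (η : ℝ) {i : Fin n} (hi : (i : ℕ) ≠ 0) :
    |1 - (1 - η) * lam i| ≤ cri n lam η :=
  le_ciSup (f := fun k : {k : Fin n // (k : ℕ) ≠ 0} => |1 - (1 - η) * lam k.1|)
    (Set.finite_range _).bddAbove ⟨i, hi⟩

theorem sub_div_add_le_cri {i j : Fin n} (hi : (i : ℕ) ≠ 0) (hj : (j : ℕ) ≠ 0)
    (hi0 : 0 < lam i) (hj0 : 0 ≤ lam j) (η : ℝ) :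
    (lam j - lam i) / (lam i + lam j) ≤ cri n lam η := by
  rw [div_le_iff₀ (by linarith)]
  calc lam j - lam i
      ≤ lam j * |1 - (1 - η) * lam i| + lam i * |1 - (1 - η) * lam j| :=
        sub_le_mul_abs_add_mul_abs hi0.le hj0 _
    _ ≤ lam j * cri n lam η + lam i * cri n lam η := by
        gcongr
        exacts [abs_le_cri η hi, abs_le_cri η hj]
    _ = cri n lam η * (lam i + lam j) := by ring

theorem cri_one_sub_two_div_add {i j : Fin n} (hi : (i : ℕ) ≠ 0) (hi0 : 0 < lam i)
    (hbounds : ∀ k : Fin n, (k : ℕ) ≠ 0 → lam i ≤ lam k ∧ lam k ≤ lam j) :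
    cri n lam (1 - 2 / (lam i + lam j)) = (lam j - lam i) / (lam i + lam j) := by
  have : Nonempty {k : Fin n // (k : ℕ) ≠ 0} := ⟨⟨i, hi⟩⟩
  have hij : lam i ≤ lam j := (hbounds i hi).2
  have hst : 0 < lam i + lam j := by linarith
  apply le_antisymm
  · refine ciSup_le ?_
    rintro ⟨k, hk⟩
    rw [sub_sub_cancel]
    exact abs_one_sub_two_div_add_mul_le hi0 (hbounds k hk).1 (hbounds k hk).2
  · calc _ = |1 - (1 - (1 - 2 / (lam i + lam j))) * lam i| := by
          rw [sub_sub_cancel, one_sub_two_div_add_mul_left hst.ne',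
            abs_of_nonneg (div_nonneg (sub_nonneg.mpr hij) hst.le)]
      _ ≤ _ := abs_le_cri _ hi

end cri

theorem stmt_18 (n : ℕ) (hn : 2 ≤ n) (G : SimpleGraph (Fin n)) [DecidableRel G.Adj]
    (hdeg : ∀ i, 0 < G.degree i)
    (A D Dneghalf L NL F0 : Matrix (Fin n) (Fin n) ℝ)
    (hD : D = Matrix.diagonal fun i => (G.degree i : ℝ))
    (hDneghalf : Dneghalf = Matrix.diagonal fun i => (Real.sqrt (G.degree i : ℝ))⁻¹)
    (hL : L = D - A)
    (hNL : NL = Dneghalf * L * Dneghalf)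
    (hF0 : F0 = D⁻¹ * A)
    (lam : Fin n → ℝ)
    (hroots : NL.charpoly.roots = Multiset.map lam Finset.univ.val)
    (hmono : Monotone lam)
    (h1 : 0 < lam ⟨1, by omega⟩) :
    (∀ η : ℝ,
      (η • (1 : Matrix (Fin n) (Fin n) ℝ) + (1 - η) • F0).charpoly.roots =
        Multiset.map (fun i => 1 - (1 - η) * lam i) Finset.univ.val) ∧
    (∀ η : ℝ,
      (lam ⟨n - 1, by omega⟩ - lam ⟨1, by omega⟩) /
          (lam ⟨1, by omega⟩ + lam ⟨n - 1, by omega⟩) ≤ cri n lam η) ∧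
    cri n lam (1 - 2 / (lam ⟨1, by omega⟩ + lam ⟨n - 1, by omega⟩)) =
      (lam ⟨n - 1, by omega⟩ - lam ⟨1, by omega⟩) /
        (lam ⟨1, by omega⟩ + lam ⟨n - 1, by omega⟩) := by
  set T : Matrix (Fin n) (Fin n) ℝ := diagonal fun i => √(G.degree i : ℝ)
  have hsqrt : ∀ i, √(G.degree i : ℝ) ≠ 0 := fun i => Real.sqrt_ne_zero'.mpr (by exact_mod_cast hdeg i)
  have hST : Dneghalf * T = 1 := by
    simp [hDneghalf, T, fun i => inv_mul_cancel₀ (hsqrt i)]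
  have hF0T : F0 = Dneghalf * (1 - NL) * T := by
    have hDsq : D = diagonal fun i => √(G.degree i : ℝ) ^ 2 := by simp [hD]
    rw [hF0, hNL, hL, hDneghalf, hDsq]
    exact diagonal_inv_mul_eq_conj_one_sub hsqrt A
  have hsplit : Multiset.card NL.charpoly.roots = Fintype.card (Fin n) := by simp [hroots]
  have hbounds : ∀ k : Fin n, (k : ℕ) ≠ 0 →
      lam ⟨1, by omega⟩ ≤ lam k ∧ lam k ≤ lam ⟨n - 1, by omega⟩ := fun k hk =>
    ⟨hmono (Fin.mk_le_of_le_val (by omega)), hmono (Fin.le_def.mpr (show (k : ℕ) ≤ n - 1 by omega))⟩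
  have hlast : ((⟨n - 1, by omega⟩ : Fin n) : ℕ) ≠ 0 := show n - 1 ≠ 0 by omega
  refine ⟨fun η => ?_,
    sub_div_add_le_cri one_ne_zero hlast h1 (h1.le.trans (hbounds _ hlast).1),
    cri_one_sub_two_div_add one_ne_zero h1 hbounds⟩
  rw [hF0T, smul_one_add_smul_mul_mul_of_mul_eq_one hST, charpoly_mul_mul_of_mul_eq_one hST,
    show η • (1 : Matrix (Fin n) (Fin n) ℝ) + (1 - η) • (1 - NL) = (1 : ℝ) • 1 + (η - 1) • NL by
      module,
    charpoly_roots_smul_one_add_smul hsplit, hroots, Multiset.map_map]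
  exact Multiset.map_congr rfl fun i _ => by simp only [Function.comp_apply]; ring
end
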